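/- Let H = (X, Y) be a hypergraph with vertex set X and hyperedge set Y whose associated bipartite graph is connected, fix two distinct hyperedges y₁, y₂ ∈ Y, suppose some vertex x ∈ X is incident to both y₁ and y₂, and let H' = (X ∪ {x*}, Y) be obtained from H by adjoining one new vertex x* incident to exactly y₁ and y₂. Then, in ℝ^Y, the convex hull of Q_{H'} is the Minkowski sum of the convex hull of Q_H and the line segment joining 1_{y₁} to 1_{y₂}: conv(Q_{H'}) = conv(Q_H) + [1_{y₁}, 1_{y₂}]. -/

import Mathlib

open SimpleGraph

/-- The bipartite graph associated to a hypergraph with hyperedge set `Y`,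
vertex set `X`, and incidence function `I`. -/
def bip {X Y : Type*} (I : Y → Finset X) : SimpleGraph (Y ⊕ X) :=
  SimpleGraph.fromRel fun a b =>
    ∃ y x, a = Sum.inl y ∧ b = Sum.inr x ∧ x ∈ I y

/-- `f : Y → ℕ` is a hypertree: there is a spanning tree of `bip I` whose
degree at each `y ∈ Y` is `f y + 1`. -/
def IsHypertree {X Y : Type*} (I : Y → Finset X) (f : Y → ℕ) : Prop :=
  ∃ T : SimpleGraph (Y ⊕ X), T ≤ bip I ∧ T.IsTree ∧
    ∀ y : Y, (T.neighborSet (Sum.inl y)).ncard = f y + 1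

/-- The incidence function of the hypergraph `H' = (X ∪ {x*}, Y)` obtained by
adjoining one new vertex `x* = none` incident to exactly `y₁` and `y₂`. -/
def extInc {X Y : Type*} [DecidableEq X] [DecidableEq Y] (I : Y → Finset X)
    (y₁ y₂ : Y) : Y → Finset (Option X) :=
  fun y => (I y).map Function.Embedding.some ∪
    (if y = y₁ ∨ y = y₂ then {none} else ∅)

open Pointwise

/-- The set of hypertrees, viewed in `ℝ^Y`. -/
def hypertreeSetR {X Y : Type*} (I : Y → Finset X) : Set (Y → ℝ) :=
  {h | ∃ f : Y → ℕ, IsHypertree I f ∧ h = fun y => (f y : ℝ)}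

/-!
A spanning tree `T'` of `bip H'` meets the new vertex `x*` in one or two edges, going to `y₁` or
`y₂`. If only one, to `c`, deleting `x*` leaves a spanning tree of `bip H` whose degree vector is
that of `T'` minus `1_c`. If two, deleting `x*` splits `T'` into a part containing `y₁` and a part
containing `y₂`; the common vertex `x` lies in one of them, say that of `c`, and joining `x` to the
other hyperedge gives a spanning tree of `bip H`, again with degree vector that of `T'` minus `1_c`.
Conversely, attaching `x*` as a leaf to `y₁` or `y₂` turns a spanning tree of `bip H` into one of
`bip H'`. Hence `Q_{H'} = Q_H + {1_{y₁}, 1_{y₂}}`, and convex hulls commute with Minkowski sums.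
-/

namespace SimpleGraph

variable {V W : Type*}

lemma ncard_neighborSet_sup_edge [Finite V] [DecidableEq V] {G : SimpleGraph V} {u v w : V}
    (hadj : ¬G.Adj u v) (huv : u ≠ v) (hw : w ≠ v) :
    ((G ⊔ edge u v).neighborSet w).ncard =
      (G.neighborSet w).ncard + if w = u then 1 else 0 := by
  by_cases hwu : w = u
  · subst hwu
    have : (G ⊔ edge w v).neighborSet w = insert v (G.neighborSet w) := by
      ext x
      simp only [mem_neighborSet, sup_adj, edge_adj, Set.mem_insert_iff]
      grind
    rw [this, Set.ncard_insert_of_notMem (show v ∉ G.neighborSet w from hadj), if_pos rfl]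
  · have : (G ⊔ edge u v).neighborSet w = G.neighborSet w := by
      ext; simp [edge_adj, hw, hwu]
    rw [this, if_neg hwu, add_zero]

lemma Preconnected.ncard_neighborSet_pos [Finite V] [Nontrivial V] {G : SimpleGraph V}
    (hG : G.Preconnected) (v : V) : 0 < (G.neighborSet v).ncard :=
  (Set.ncard_pos (Set.toFinite _)).2 (hG.exists_adj_of_nontrivial v)

variable (f : V ↪ W) {z : W}

open scoped Classical in
lemma ncard_neighborSet_eq_comap_add [Finite W] {G : SimpleGraph W}
    (hf : Set.range f = {z}ᶜ) (v : V) :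
    (G.neighborSet (f v)).ncard =
      ((G.comap f).neighborSet v).ncard + if G.Adj (f v) z then 1 else 0 := by
  have hrange : ∀ w, w ∈ Set.range f ↔ w ≠ z := fun w => by rw [hf]; rfl
  have himage : G.neighborSet (f v) \ {z} = f '' (G.comap f).neighborSet v := by
    ext w
    simp only [Set.mem_sdiff, mem_neighborSet, Set.mem_singleton_iff, Set.mem_image,
      comap_adj]
    constructor
    · rintro ⟨hadj, hwz⟩
      obtain ⟨u, rfl⟩ := (hrange w).2 hwz
      exact ⟨u, hadj, rfl⟩
    · rintro ⟨u, hadj, rfl⟩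
      exact ⟨hadj, (hrange _).1 ⟨u, rfl⟩⟩
  rw [← Set.ncard_inter_add_ncard_sdiff_eq_ncard _ {z}, himage,
    Set.ncard_image_of_injective _ f.injective, add_comm]
  split_ifs with h
  · rw [Set.inter_eq_right.2 (Set.singleton_subset_iff.2 (show z ∈ G.neighborSet (f v) from h)),
      Set.ncard_singleton]
  · rw [Set.inter_singleton_eq_empty.2 (show z ∉ G.neighborSet (f v) from h), Set.ncard_empty]

theorem IsTree.map_sup_edge [Finite W] {T : SimpleGraph V} (hT : T.IsTree)
    (hf : Set.range f = {z}ᶜ) (c : V) : (T.map f ⊔ edge (f c) z).IsTree := by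
  have : Finite V := Finite.of_injective f f.injective
  rw [isTree_iff_connected_and_card] at hT ⊢
  obtain ⟨hconn, hcard⟩ := hT
  have hz : ∀ v, f v ≠ z := fun v h => (Set.ext_iff.1 hf (f v)).1 ⟨v, rfl⟩ h
  refine ⟨(connected_iff_exists_forall_reachable _).2 ⟨f c, fun w => ?_⟩, ?_⟩
  · by_cases hw : w = z
    · subst hw
      have hadj : (T.map f ⊔ edge (f c) w).Adj (f c) w :=
        Or.inr ((edge_adj _ _ _ _).2 ⟨Or.inl ⟨rfl, rfl⟩, hz c⟩)
      exact hadj.reachable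
    · obtain ⟨v, rfl⟩ := (Set.ext_iff.1 hf w).2 hw
      exact (hconn.preconnected c v).map
        ((Hom.ofLE le_sup_left).comp (Embedding.map f T).toHom)
  · have hnew : s(f c, z) ∉ (T.map f).edgeSet := fun h => by
      rw [edgeSet_map] at h
      obtain ⟨e, -, he⟩ := h
      induction e using Sym2.ind with
      | _ a b => exact hz b (Sym2.eq_iff.1 he |>.elim (·.2) (fun h' => (hz a h'.1).elim))
    rw [← Set.ncard_add_ncard_compl {z}, ← hf, Set.ncard_singleton,
      Set.ncard_range_of_injective f.injective, ← hcard, edgeSet_sup,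
      edgeSet_edge_of_ne (hz c), Set.union_singleton, Nat.card_coe_set_eq,
      Set.ncard_insert_of_notMem hnew, edgeSet_map,
      Set.ncard_image_of_injective _ f.sym2Map.injective, Nat.card_coe_set_eq]
    ring

theorem Connected.exists_adj_reachable_comap {G : SimpleGraph W} (hG : G.Connected)
    (hf : Set.range f = {z}ᶜ) (v : V) :
    ∃ u, G.Adj (f u) z ∧ (G.comap f).Reachable v u := by
  suffices ∀ w w' (p : G.Walk w w'), w' = z → ∀ v, f v = w →
      ∃ u, G.Adj (f u) z ∧ (G.comap f).Reachable v u from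
    this _ _ (hG.preconnected (f v) z).some rfl v rfl
  intro w w' p
  induction p with
  | nil => rintro rfl v hv; exact absurd hv ((Set.ext_iff.1 hf _).1 ⟨v, rfl⟩)
  | @cons w w' _ hadj p ih =>
    rintro hend v rfl
    by_cases hw' : w' = z
    · exact ⟨v, hw' ▸ hadj, .rfl⟩
    · obtain ⟨v', rfl⟩ := (Set.ext_iff.1 hf w').2 hw'
      obtain ⟨u, hu, hreach⟩ := ih hend v' rfl
      exact ⟨u, hu, (show (G.comap f).Adj v v' from hadj).reachable.trans hreach⟩

theorem IsAcyclic.not_reachable_comap {G : SimpleGraph W} (hG : G.IsAcyclic)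
    (hz : z ∉ Set.range f) {a b : V} (ha : G.Adj (f a) z) (hb : G.Adj (f b) z) (hab : a ≠ b) :
    ¬(G.comap f).Reachable a b := by
  intro hreach
  refine isAcyclic_iff_forall_adj_isBridge.1 hG ha ?_
  let φ : G.comap f →g G.deleteEdges {s(f a, z)} :=
    ⟨f, fun {u w} h => deleteEdges_adj.2 ⟨h, fun he => by
      rcases Sym2.eq_iff.1 he with ⟨-, hw⟩ | ⟨hu, -⟩
      exacts [hz ⟨w, hw⟩, hz ⟨u, hu⟩]⟩⟩
  have hb' : (G.deleteEdges {s(f a, z)}).Adj (f b) z := deleteEdges_adj.2 ⟨hb, fun he => by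
    rcases Sym2.eq_iff.1 he with ⟨h, -⟩ | ⟨h, -⟩
    exacts [hab (f.injective h).symm, hz ⟨b, h⟩]⟩
  exact (hreach.map φ).trans hb'.reachable

end SimpleGraph

section Hypergraph

variable {X Y : Type*}

@[simp] lemma bip_adj_inl_inr {I : Y → Finset X} {y : Y} {x : X} :
    (bip I).Adj (Sum.inl y) (Sum.inr x) ↔ x ∈ I y := by
  simp [bip]

def extEmbedding : Y ⊕ X ↪ Y ⊕ Option X :=
  Function.Embedding.sumMap (.refl Y) .some

@[simp] lemma extEmbedding_inl (y : Y) : extEmbedding (Sum.inl y : Y ⊕ X) = Sum.inl y := rfl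

lemma range_extEmbedding :
    Set.range (extEmbedding : Y ⊕ X ↪ Y ⊕ Option X) = {Sum.inr none}ᶜ := by
  ext (_ | _ | _) <;> simp [extEmbedding]

lemma SimpleGraph.IsTree.isHypertree [Finite X] [Finite Y] [Nontrivial (Y ⊕ X)]
    {I : Y → Finset X} {T : SimpleGraph (Y ⊕ X)} (hle : T ≤ bip I) (hT : T.IsTree) :
    IsHypertree I fun y => (T.neighborSet (Sum.inl y)).ncard - 1 :=
  ⟨T, hle, hT, fun _ =>
    (Nat.sub_add_cancel (hT.connected.preconnected.ncard_neighborSet_pos _)).symm⟩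

variable [DecidableEq X] [DecidableEq Y] {I : Y → Finset X} {y₁ y₂ : Y}

@[simp] lemma some_mem_extInc {y : Y} {x : X} : some x ∈ extInc I y₁ y₂ y ↔ x ∈ I y := by
  unfold extInc; split_ifs <;> simp

@[simp] lemma none_mem_extInc {y : Y} : none ∈ extInc I y₁ y₂ y ↔ y = y₁ ∨ y = y₂ := by
  unfold extInc; split_ifs <;> simp [*]

lemma comap_bip_extInc :
    (bip (extInc I y₁ y₂)).comap extEmbedding = bip I := by
  ext (y | x) (y' | x') <;> simp [bip, extEmbedding]

lemma bip_extInc_adj_none {y : Y} :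
    (bip (extInc I y₁ y₂)).Adj (Sum.inl y) (Sum.inr none) ↔ y = y₁ ∨ y = y₂ := by
  simp

lemma exists_inl_of_adj_none {T : SimpleGraph (Y ⊕ Option X)} (hle : T ≤ bip (extInc I y₁ y₂))
    {u : Y ⊕ X} (h : T.Adj (extEmbedding u) (Sum.inr none)) :
    ∃ y, u = Sum.inl y ∧ (y = y₁ ∨ y = y₂) := by
  rcases u with y | x
  · exact ⟨y, rfl, bip_extInc_adj_none.1 (hle h)⟩
  · simpa [bip, extEmbedding] using hle h

theorem IsHypertree.extInc_add_single [Finite X] [Finite Y] {f : Y → ℕ} (hf : IsHypertree I f)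
    {c : Y} (hc : c = y₁ ∨ c = y₂) : IsHypertree (extInc I y₁ y₂) (f + Pi.single c 1) := by
  obtain ⟨T, hle, hT, hdeg⟩ := hf
  have hz : ∀ u, extEmbedding u ≠ (Sum.inr none : Y ⊕ Option X) :=
    fun u h => (Set.ext_iff.1 range_extEmbedding _).1 ⟨u, rfl⟩ h
  have hnadj : ∀ u, ¬(T.map extEmbedding).Adj u (Sum.inr none) := by
    rintro _ ⟨-, -, b, -, -, hb⟩
    exact hz b hb
  refine ⟨T.map extEmbedding ⊔ edge (Sum.inl c) (Sum.inr none), sup_le ?_ ?_,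
    hT.map_sup_edge _ range_extEmbedding (Sum.inl c), fun y => ?_⟩
  · exact (map_le_iff_le_comap _ _ _).2 (hle.trans comap_bip_extInc.ge)
  · exact (edge_le_iff _).2 (Or.inr (bip_extInc_adj_none.2 hc))
  · rw [ncard_neighborSet_sup_edge (hnadj _) Sum.inl_ne_inr Sum.inl_ne_inr, ← extEmbedding_inl,
      ncard_neighborSet_eq_comap_add _ range_extEmbedding, comap_map_eq, hdeg y, if_neg (hnadj _)]
    simp only [extEmbedding_inl, Sum.inl.injEq, Pi.add_apply, Pi.single_apply]
    omega

theorem SimpleGraph.IsTree.exists_isTree_of_extInc [Finite X] [Finite Y]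
    (hx : ∃ x, x ∈ I y₁ ∧ x ∈ I y₂) {T' : SimpleGraph (Y ⊕ Option X)}
    (hle : T' ≤ bip (extInc I y₁ y₂)) (hT' : T'.IsTree) :
    ∃ c, (c = y₁ ∨ c = y₂) ∧ ∃ T ≤ bip I, T.IsTree ∧ ∀ y,
      (T'.neighborSet (Sum.inl y)).ncard =
        (T.neighborSet (Sum.inl y)).ncard + if y = c then 1 else 0 := by
  obtain ⟨x, hx₁, hx₂⟩ := hx
  have hreach := hT'.connected.exists_adj_reachable_comap _ range_extEmbedding
  have hdeg := ncard_neighborSet_eq_comap_add (G := T') _ range_extEmbedding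
  set S := T'.comap extEmbedding
  have hSle : S ≤ bip I := comap_bip_extInc (I := I) (y₁ := y₁) (y₂ := y₂) ▸ comap_monotone _ hle
  have hS : S.IsAcyclic := hT'.isAcyclic.of_comap _
  obtain ⟨_, hu, hxc⟩ := hreach (Sum.inr x)
  obtain ⟨c, rfl, hc⟩ := exists_inl_of_adj_none hle hu
  refine ⟨c, hc, ?_⟩
  by_cases h : ∃ c', c' ≠ c ∧ T'.Adj (Sum.inl c') (Sum.inr none)
  · obtain ⟨c', hne, hc'adj⟩ := h
    have hc' : c' = y₁ ∨ c' = y₂ := bip_extInc_adj_none.1 (hle hc'adj)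
    have hnbr : ∀ y, T'.Adj (Sum.inl y) (Sum.inr none) ↔ y = c ∨ y = c' := by
      refine fun y => ⟨fun h => ?_, by rintro (rfl | rfl); exacts [hu, hc'adj]⟩
      have := bip_extInc_adj_none.1 (hle h)
      grind
    have hnreach : ¬S.Reachable (Sum.inl c') (Sum.inr x) := fun h =>
      hT'.isAcyclic.not_reachable_comap _ (by simp [range_extEmbedding]) hc'adj hu
        (by simpa using hne) (h.trans hxc)
    have hedge : (S ⊔ edge (Sum.inl c') (Sum.inr x)).Adj (Sum.inl c') (Sum.inr x) :=
      Or.inr ((edge_adj _ _ _ _).2 ⟨Or.inl ⟨rfl, rfl⟩, Sum.inl_ne_inr⟩)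
    refine ⟨S ⊔ edge (Sum.inl c') (Sum.inr x), sup_le hSle ((edge_le_iff _).2 (Or.inr ?_)),
      ⟨(connected_iff_exists_forall_reachable _).2 ⟨Sum.inl c, fun v => ?_⟩,
        hS.sup_edge_of_not_reachable hnreach⟩, fun y => ?_⟩
    · rcases hc' with rfl | rfl <;> simpa
    · obtain ⟨_, hv, hvy⟩ := hreach v
      obtain ⟨y, rfl, -⟩ := exists_inl_of_adj_none hle hv
      rcases (hnbr y).1 hv with rfl | rfl
      · exact (hvy.mono le_sup_left).symm
      · exact ((hxc.mono le_sup_left).symm.trans hedge.symm.reachable).trans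
          (hvy.mono le_sup_left).symm
    · rw [ncard_neighborSet_sup_edge (fun h => hnreach h.reachable) Sum.inl_ne_inr
        Sum.inl_ne_inr, ← extEmbedding_inl, hdeg]
      simp only [extEmbedding_inl, hnbr]
      split_ifs <;> simp_all
  · push Not at h
    have hnbr : ∀ y, T'.Adj (Sum.inl y) (Sum.inr none) ↔ y = c :=
      fun y => ⟨fun h' => by_contra fun hne => h y hne h', by rintro rfl; exact hu⟩
    refine ⟨S, hSle, ⟨(connected_iff_exists_forall_reachable _).2 ⟨Sum.inl c, fun v => ?_⟩, hS⟩,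
      fun y => ?_⟩
    · obtain ⟨_, hv, hvy⟩ := hreach v
      obtain ⟨y, rfl, -⟩ := exists_inl_of_adj_none hle hv
      exact (hnbr y).1 hv ▸ hvy.symm
    · rw [← extEmbedding_inl, hdeg]
      simp only [extEmbedding_inl, hnbr]

theorem IsHypertree.exists_add_single_of_extInc [Finite X] [Finite Y]
    (hx : ∃ x, x ∈ I y₁ ∧ x ∈ I y₂) {f' : Y → ℕ} (hf' : IsHypertree (extInc I y₁ y₂) f') :
    ∃ c, (c = y₁ ∨ c = y₂) ∧ ∃ f, IsHypertree I f ∧ f' = f + Pi.single c 1 := by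
  obtain ⟨T', hle', hT', hdeg'⟩ := hf'
  obtain ⟨c, hc, T, hle, hT, hdeg⟩ := hT'.exists_isTree_of_extInc hx hle'
  have : Nontrivial (Y ⊕ X) := ⟨⟨Sum.inl c, Sum.inr hx.choose, Sum.inl_ne_inr⟩⟩
  refine ⟨c, hc, _, hT.isHypertree hle, funext fun y => ?_⟩
  have hpos := hT.connected.preconnected.ncard_neighborSet_pos (Sum.inl y)
  have := (hdeg' y).symm.trans (hdeg y)
  simp only [Pi.add_apply, Pi.single_apply]
  split_ifs at this ⊢ <;> omega

theorem hypertreeSetR_extInc [Finite X] [Finite Y] (hx : ∃ x, x ∈ I y₁ ∧ x ∈ I y₂) :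
    hypertreeSetR (extInc I y₁ y₂) = hypertreeSetR I +
      {fun y => if y = y₁ then (1 : ℝ) else 0, fun y => if y = y₂ then (1 : ℝ) else 0} := by
  have hcast (f : Y → ℕ) (c : Y) : ((fun y => (f y : ℝ)) + fun y => if y = c then 1 else 0) =
      fun y => (((f + Pi.single c 1 : Y → ℕ) y : ℕ) : ℝ) := by
    ext y
    simp [Pi.single_apply]
  ext h
  simp only [hypertreeSetR, Set.mem_add, Set.mem_ofPred_eq, Set.mem_insert_iff,
    Set.mem_singleton_iff]
  constructor
  · rintro ⟨f', hf', rfl⟩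
    obtain ⟨c, hc, f, hf, rfl⟩ := hf'.exists_add_single_of_extInc hx
    refine ⟨_, ⟨f, hf, rfl⟩, fun y => if y = c then 1 else 0, ?_, hcast f c⟩
    rcases hc with rfl | rfl <;> simp
  · rintro ⟨_, ⟨f, hf, rfl⟩, _, hc | hc, rfl⟩ <;> subst hc
    · exact ⟨_, hf.extInc_add_single (Or.inl rfl), hcast f y₁⟩
    · exact ⟨_, hf.extInc_add_single (Or.inr rfl), hcast f y₂⟩

end Hypergraph

theorem extInc_convexHull_general {X Y : Type*} [Fintype X] [Fintype Y]
    [DecidableEq X] [DecidableEq Y] (I : Y → Finset X)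
    (y₁ y₂ : Y) (hx : ∃ x, x ∈ I y₁ ∧ x ∈ I y₂) :
    convexHull ℝ (hypertreeSetR (extInc I y₁ y₂)) =
      convexHull ℝ (hypertreeSetR I) +
        segment ℝ (fun y => if y = y₁ then (1 : ℝ) else 0)
          (fun y => if y = y₂ then (1 : ℝ) else 0) := by
  rw [hypertreeSetR_extInc hx, convexHull_add, convexHull_pair]

/-- If some vertex `x ∈ X` is incident to both `y₁` and `y₂`, then in
`ℝ^Y` the convex hull of `Q_{H'}` is the Minkowski sum of the convex hull of
`Q_H` and the segment joining `1_{y₁}` to `1_{y₂}`. -/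
theorem extInc_convexHull {X Y : Type*} [Fintype X] [Fintype Y]
    [DecidableEq X] [DecidableEq Y] (I : Y → Finset X)
    (hne : ∀ y, (I y).Nonempty) (hconn : (bip I).Connected)
    (y₁ y₂ : Y) (hy : y₁ ≠ y₂) (hx : ∃ x, x ∈ I y₁ ∧ x ∈ I y₂) :
    convexHull ℝ (hypertreeSetR (extInc I y₁ y₂)) =
      convexHull ℝ (hypertreeSetR I) +
        segment ℝ (fun y => if y = y₁ then (1 : ℝ) else 0)
          (fun y => if y = y₂ then (1 : ℝ) else 0) :=
  extInc_convexHull_general I y₁ y₂ hx
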